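/- arXiv:2301.06809 — 4 statements merged into one kernel-verified Lean document; each statement's English description precedes it below -/
import Mathlib

section
/- Let A be a 3×3 real matrix and let M(A) denote the sum of its three principal 2×2 minors. If det A = M(A) · trace A and M(A) > 0, then the eigenvalues of A regarded as a complex matrix are exactly trace A, i·√(M(A)) and −i·√(M(A)); in particular A has a real eigenvalue equal to its trace and a pair of nonzero purely imaginary conjugate eigenvalues ±iω with ω² = M(A). -/
open Matrix

/-- Sum of the three principal 2×2 minors of a 3×3 real matrix. -/
def minorSum (A : Matrix (Fin 3) (Fin 3) ℝ) : ℝ :=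
  (A 1 1 * A 2 2 - A 1 2 * A 2 1) + (A 0 0 * A 2 2 - A 0 2 * A 2 0) +
    (A 0 0 * A 1 1 - A 0 1 * A 1 0)

theorem spec_eq (A : Matrix (Fin 3) (Fin 3) ℝ)
    (hdet : A.det = minorSum A * A.trace) (hM : 0 < minorSum A) :
    spectrum ℂ (A.map (Complex.ofReal)) =
      {(A.trace : ℂ), Complex.I * (Real.sqrt (minorSum A) : ℂ),
        -(Complex.I * (Real.sqrt (minorSum A) : ℂ))} := by
  set ω : ℝ := Real.sqrt (minorSum A) with hωdef
  have hω2 : ((ω : ℂ)) ^ 2 = ((minorSum A : ℝ) : ℂ) := by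
    rw [← Complex.ofReal_pow, Real.sq_sqrt hM.le]
  have hdet' : A.det = minorSum A * A.trace := hdet
  rw [Matrix.det_fin_three, Matrix.trace_fin_three] at hdet'
  unfold minorSum at hdet'
  have hdc := congrArg (Complex.ofReal) hdet'
  push_cast at hdc
  have htr : ((A.trace : ℝ) : ℂ) = ((A 0 0 : ℝ) : ℂ) + A 1 1 + A 2 2 := by
    rw [Matrix.trace_fin_three]; push_cast; ring
  have hm : ((ω : ℂ)) ^ 2 = (((A 1 1 : ℝ) : ℂ) * A 2 2 - A 1 2 * A 2 1) +
      ((A 0 0 : ℝ) * A 2 2 - A 0 2 * A 2 0) + ((A 0 0 : ℝ) * A 1 1 - A 0 1 * A 1 0) := by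
    rw [hω2]; unfold minorSum; push_cast; ring
  ext μ
  have hmem : μ ∈ spectrum ℂ (A.map Complex.ofReal) ↔
      ((μ • (1 : Matrix (Fin 3) (Fin 3) ℂ) - A.map Complex.ofReal).det = 0) := by
    rw [spectrum.mem_iff, Matrix.isUnit_iff_isUnit_det, isUnit_iff_ne_zero, not_ne_iff,
      Algebra.algebraMap_eq_smul_one]
  have hfac : (μ • (1 : Matrix (Fin 3) (Fin 3) ℂ) - A.map Complex.ofReal).det
      = (μ - (A.trace : ℂ)) * (μ - Complex.I * ω) * (μ + Complex.I * ω) := by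
    rw [Matrix.det_fin_three]
    have e : ∀ i j : Fin 3, (μ • (1 : Matrix (Fin 3) (Fin 3) ℂ) - A.map Complex.ofReal) i j
        = (if i = j then μ else 0) - (A i j : ℂ) := by
      intro i j; simp [Matrix.one_apply, Matrix.map_apply]
    simp only [e]
    norm_num [Fin.ext_iff]
    rw [htr]
    have hI : Complex.I ^ 2 = -1 := Complex.I_sq
    linear_combination (-μ + (((A 0 0:ℝ):ℂ) + A 1 1 + A 2 2)) * hm - hdc + (μ - (((A 0 0:ℝ):ℂ) + A 1 1 + A 2 2)) * (ω:ℂ)^2 * hI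
  rw [hmem, hfac]
  simp only [mul_eq_zero, sub_eq_zero, add_eq_zero_iff_eq_neg, Set.mem_insert_iff,
    Set.mem_singleton_iff]
  tauto

theorem eigenvalues_of_det_eq_minorSum_mul_trace
    (A : Matrix (Fin 3) (Fin 3) ℝ)
    (hdet : A.det = minorSum A * A.trace) (hM : 0 < minorSum A) :
    spectrum ℂ (A.map (Complex.ofReal)) =
      {(A.trace : ℂ), Complex.I * (Real.sqrt (minorSum A) : ℂ),
        -(Complex.I * (Real.sqrt (minorSum A) : ℂ))} ∧
    ∃ ω : ℝ, ω ≠ 0 ∧ ω ^ 2 = minorSum A ∧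
      spectrum ℂ (A.map (Complex.ofReal)) =
        {(A.trace : ℂ), Complex.I * (ω : ℂ), -(Complex.I * (ω : ℂ))} := by
  refine ⟨spec_eq A hdet hM, Real.sqrt (minorSum A), ?_, Real.sq_sqrt hM.le,
    spec_eq A hdet hM⟩
  exact ne_of_gt (Real.sqrt_pos.mpr hM)
end

section
/- For all real λ < 0 and n < 0 satisfying 222495265686330·λ·n < 2798106304433, one has μ*(λ,n) < 0 and every entry of the matrix A(λ,n,μ*(λ,n)) is negative (so the corresponding Lotka–Volterra system is competitive). Moreover, every pair (λ,n) with λ ∈ I_λ and n ∈ I_n satisfies λ < 0, n < 0 and 222495265686330·λ·n < 2798106304433. -/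
open Matrix

/-- The interaction matrix A(λ, n, μ) of the paper. -/
noncomputable def Amat (l n m : ℝ) : Matrix (Fin 3) (Fin 3) ℝ :=
  !![-4/45, -4/91, l; -89/93, -25/27, m; n, 91*n, -47/74]

/-- The value μ*(λ, n) enforcing the eigenvalue condition. -/
noncomputable def mustar (l n : ℝ) : ℝ :=
  -(222495265686330 * l * n - 2798106304433) / (360057794237550 * n)

/-- The isolating interval for λ. -/
noncomputable def Ilam : Set ℝ :=
  Set.Icc (-(149768422799541462651825945028449 : ℝ) / 2596148429267413814265248164610048)
    (-(74884211399770731325912972514103 : ℝ) / 1298074214633706907132624082305024)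

/-- The isolating interval for n. -/
noncomputable def In : Set ℝ :=
  Set.Icc
    (-(153114826873895465369593577180012763583 : ℝ) / 21778071482940061661655974875633165533184)
    (-(1087946279724117924228707 : ℝ) / 154742504910672534362390528)

theorem competitive_system :
    (∀ l n : ℝ, l < 0 → n < 0 → 222495265686330 * l * n < 2798106304433 →
      mustar l n < 0 ∧ ∀ i j : Fin 3, Amat l n (mustar l n) i j < 0) ∧
    (∀ l ∈ Ilam, ∀ n ∈ In,
      l < 0 ∧ n < 0 ∧ 222495265686330 * l * n < 2798106304433) := by
  constructor
  · intro l n hl hn hprod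
    have hmu : mustar l n < 0 := by
      unfold mustar
      apply div_neg_of_pos_of_neg
      · linarith
      · nlinarith
    refine ⟨hmu, ?_⟩
    intro i j
    fin_cases i <;> fin_cases j <;>
      simp [Amat, Matrix.cons_val_zero, Matrix.cons_val_one] <;> nlinarith
  · rintro l ⟨hl1, hl2⟩ n ⟨hn1, hn2⟩
    refine ⟨by nlinarith, by nlinarith, by nlinarith⟩
end

section
/- For every λ ∈ I_λ and n ∈ I_n, the quantity z₂(λ,n) has sign opposite to L(λ,n) := 1018985380559055·λ·n − 413291543818; precisely, L(λ,n)·z₂(λ,n) ≤ 0, with equality if and only if L(λ,n) = 0. Here z₂(λ,n) = 308404613169191759785745988893636282984773193703939879857417448365191052030968938438144953125 · (6428118463420475727360·λ·n + 17194768968240236003) · (401757403963779732960·λ·n + 19639008221703393443)¹⁰ · (321405923171023786368·λ·n + 3830032074202152391)⁵ · (723163327134803519328·λ·n + 3667082790637941895)² · (1018985380559055·λ·n − 413291543818) · (91766105462556215337465·λ·n + 607101471485504566516)⁵ · n⁷. -/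
/-- The linear factor L(λ,n). -/
noncomputable def L (l n : ℝ) : ℝ := 1018985380559055 * l * n - 413291543818

/-- The denominator z₂ of the third focal value LV₃. -/
noncomputable def z2 (l n : ℝ) : ℝ :=
  308404613169191759785745988893636282984773193703939879857417448365191052030968938438144953125
    * (6428118463420475727360 * l * n + 17194768968240236003)
    * (401757403963779732960 * l * n + 19639008221703393443)^10
    * (321405923171023786368 * l * n + 3830032074202152391)^5
    * (723163327134803519328 * l * n + 3667082790637941895)^2
    * (1018985380559055 * l * n - 413291543818)
    * (91766105462556215337465 * l * n + 607101471485504566516)^5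
    * n^7

theorem z2_sign_opposite_L : ∀ l ∈ Ilam, ∀ n ∈ In,
    L l n * z2 l n ≤ 0 ∧ (L l n * z2 l n = 0 ↔ L l n = 0) := by
  intro l hl n hn
  obtain ⟨hl1, hl2⟩ := hl
  obtain ⟨hn1, hn2⟩ := hn
  have hlneg : l < 0 := by
    refine lt_of_le_of_lt hl2 ?_
    norm_num
  have hnneg : n < 0 := by
    refine lt_of_le_of_lt hn2 ?_
    norm_num
  -- lower bound for l * n
  have hp : (81469999202454948315441414104836867583673903286954954821 : ℝ)
      / 200867255532373784442745261542645325315275374222849104412672 ≤ l * n := by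
    have h1 : l * n ≥ l * (-(1087946279724117924228707 : ℝ) / 154742504910672534362390528) :=
      mul_le_mul_of_nonpos_left hn2 hlneg.le
    have h2 : l * (-(1087946279724117924228707 : ℝ) / 154742504910672534362390528) ≥
        (-(74884211399770731325912972514103 : ℝ) / 1298074214633706907132624082305024) *
        (-(1087946279724117924228707 : ℝ) / 154742504910672534362390528) := by
      apply mul_le_mul_of_nonpos_right hl2
      norm_num
    refine le_trans ?_ (le_trans h2 h1)
    norm_num
  set p : ℝ := l * n with hpdef
  have hF1 : (6428118463420475727360 : ℝ) * l * n + 17194768968240236003 > 0 := by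
    nlinarith [hp]
  have hF2 : (401757403963779732960 : ℝ) * l * n + 19639008221703393443 > 0 := by
    nlinarith [hp]
  have hF3 : (321405923171023786368 : ℝ) * l * n + 3830032074202152391 > 0 := by
    nlinarith [hp]
  have hF4 : (723163327134803519328 : ℝ) * l * n + 3667082790637941895 > 0 := by
    nlinarith [hp]
  have hF5 : (91766105462556215337465 : ℝ) * l * n + 607101471485504566516 > 0 := by
    nlinarith [hp]
  have hn7 : n ^ 7 < 0 := Odd.pow_neg ⟨3, by norm_num⟩ hnneg
  have hM : (308404613169191759785745988893636282984773193703939879857417448365191052030968938438144953125 : ℝ)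
      * (6428118463420475727360 * l * n + 17194768968240236003)
      * (401757403963779732960 * l * n + 19639008221703393443)^10
      * (321405923171023786368 * l * n + 3830032074202152391)^5
      * (723163327134803519328 * l * n + 3667082790637941895)^2
      * (91766105462556215337465 * l * n + 607101471485504566516)^5
      * n^7 < 0 := by
    apply mul_neg_of_pos_of_neg _ hn7
    positivity
  have hkey : L l n * z2 l n = (L l n)^2 *
      ((308404613169191759785745988893636282984773193703939879857417448365191052030968938438144953125 : ℝ)
      * (6428118463420475727360 * l * n + 17194768968240236003)
      * (401757403963779732960 * l * n + 19639008221703393443)^10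
      * (321405923171023786368 * l * n + 3830032074202152391)^5
      * (723163327134803519328 * l * n + 3667082790637941895)^2
      * (91766105462556215337465 * l * n + 607101471485504566516)^5
      * n^7) := by
    unfold L z2; ring
  constructor
  · rw [hkey]
    exact mul_nonpos_of_nonneg_of_nonpos (sq_nonneg _) hM.le
  · constructor
    · intro h
      rw [hkey] at h
      rcases mul_eq_zero.mp h with h' | h'
      · exact pow_eq_zero_iff (by norm_num) |>.mp h'
      · exact absurd h' hM.ne
    · intro h
      rw [hkey, h]
      ring
end

section
/- For every λ ∈ I_λ and n ∈ I_n, let A = A(λ,n,μ*(λ,n)) with entries aᵢⱼ, let Gᵢ(x) = Σⱼ aᵢⱼ(xⱼ − 1) for x ∈ ℝ³, and for each i = 1,2,3 let Rᵢ be the axial equilibrium Rᵢ = rᵢ·eᵢ with rᵢ = (Σⱼ aᵢⱼ)/aᵢᵢ. Then rᵢ > 0 for all i, and the following sign conditions hold: G₂(R₁) > 0, G₃(R₁) > 0, G₁(R₂) > 0, G₃(R₂) < 0, G₁(R₃) > 0, G₂(R₃) > 0. (In Zeeman's notation these are the algebraic invariants R₁₂ = R₁₃ = R₂₁ = R₃₁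 = R₃₂ = −1 and R₂₃ = +1 of class 31.) -/
open Matrix

/-- The growth rate Gᵢ(x) = Σⱼ aᵢⱼ(xⱼ − 1). -/
noncomputable def G (A : Matrix (Fin 3) (Fin 3) ℝ) (x : Fin 3 → ℝ) (i : Fin 3) : ℝ :=
  ∑ j, A i j * (x j - 1)

/-- The axial equilibrium Rᵢ = ((Σⱼ aᵢⱼ)/aᵢᵢ)·eᵢ on the xᵢ-axis. -/
noncomputable def Raxis (A : Matrix (Fin 3) (Fin 3) ℝ) (i : Fin 3) : Fin 3 → ℝ :=
  fun j => if j = i then (∑ k, A i k) / A i i else 0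

set_option maxHeartbeats 1000000
theorem axial_sign_conditions_class31 (l n : ℝ) (hl : l ∈ Ilam) (hn : n ∈ In) :
    (∀ i : Fin 3,
        0 < (∑ k, Amat l n (mustar l n) i k) / Amat l n (mustar l n) i i) ∧
    0 < G (Amat l n (mustar l n)) (Raxis (Amat l n (mustar l n)) 0) 1 ∧
    0 < G (Amat l n (mustar l n)) (Raxis (Amat l n (mustar l n)) 0) 2 ∧
    0 < G (Amat l n (mustar l n)) (Raxis (Amat l n (mustar l n)) 1) 0 ∧
    G (Amat l n (mustar l n)) (Raxis (Amat l n (mustar l n)) 1) 2 < 0 ∧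
    0 < G (Amat l n (mustar l n)) (Raxis (Amat l n (mustar l n)) 2) 0 ∧
    0 < G (Amat l n (mustar l n)) (Raxis (Amat l n (mustar l n)) 2) 1 := by

  obtain ⟨hl1, hl2⟩ := hl
  obtain ⟨hn1, hn2⟩ := hn
  have hn0 : n < 0 := lt_of_le_of_lt hn2 (by norm_num)
  have hnne : n ≠ 0 := ne_of_lt hn0
  set m := mustar l n with hmdef
  have key : 360057794237550 * n * m = -(222495265686330 * l * n) + 2798106304433 := by
    rw [hmdef, mustar]
    field_simp
    ring
  have hp1 : 0 ≤ (l - (-(149768422799541462651825945028449 : ℝ) / 2596148429267413814265248164610048)) * (n - (-(153114826873895465369593577180012763583 : ℝ) / 21778071482940061661655974875633165533184)) := mul_nonneg (by linarith) (by linarith)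
  have hp2 : 0 ≤ ((-(74884211399770731325912972514103 : ℝ) / 1298074214633706907132624082305024) - l) * (n - (-(153114826873895465369593577180012763583 : ℝ) / 21778071482940061661655974875633165533184)) := mul_nonneg (by linarith) (by linarith)
  have hp3 : 0 ≤ (l - (-(149768422799541462651825945028449 : ℝ) / 2596148429267413814265248164610048)) * ((-(1087946279724117924228707 : ℝ) / 154742504910672534362390528) - n) := mul_nonneg (by linarith) (by linarith)
  have hp4 : 0 ≤ ((-(74884211399770731325912972514103 : ℝ) / 1298074214633706907132624082305024) - l) * ((-(1087946279724117924228707 : ℝ) / 154742504910672534362390528) - n) := mul_nonneg (by linarith) (by linarith)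
  have hmL : (-107/100 : ℝ) ≤ m := by
    by_contra h
    push_neg at h
    nlinarith [key, mul_pos_of_neg_of_neg hn0 (show m + 107/100 < 0 by linarith), hp1, hp2, hp3, hp4]
  have hmU : m ≤ (-1337/1250 : ℝ) := by
    by_contra h
    push_neg at h
    nlinarith [key, mul_neg_of_neg_of_pos hn0 (show (0:ℝ) < m + 1337/1250 by linarith), hp1, hp2, hp3, hp4]
  have hq1 : 0 ≤ (m - (-107/100 : ℝ)) * (n - (-(153114826873895465369593577180012763583 : ℝ) / 21778071482940061661655974875633165533184)) := mul_nonneg (by linarith) (by linarith)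
  have hq2 : 0 ≤ ((-1337/1250 : ℝ) - m) * (n - (-(153114826873895465369593577180012763583 : ℝ) / 21778071482940061661655974875633165533184)) := mul_nonneg (by linarith) (by linarith)
  have hq3 : 0 ≤ (m - (-107/100 : ℝ)) * ((-(1087946279724117924228707 : ℝ) / 154742504910672534362390528) - n) := mul_nonneg (by linarith) (by linarith)
  have hq4 : 0 ≤ ((-1337/1250 : ℝ) - m) * ((-(1087946279724117924228707 : ℝ) / 154742504910672534362390528) - n) := mul_nonneg (by linarith) (by linarith)
  refine ⟨?_, ?_, ?_, ?_, ?_, ?_, ?_⟩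
  · intro i
    fin_cases i <;>
      simp [Amat, Fin.sum_univ_three] <;>
      rw [div_pos_iff] <;> right <;> constructor <;> linarith
  all_goals simp [G, Raxis, Amat, Fin.sum_univ_three]
  · linarith
  · nlinarith [hp1, hp2, hp3, hp4]
  · linarith
  · nlinarith [hq1, hq2, hq3, hq4]
  · nlinarith [hp1, hp2, hp3, hp4]
  · nlinarith [hq1, hq2, hq3, hq4]
end
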